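/- arXiv:2503.12544 — 2 statements merged into one kernel-verified Lean document; each statement's English description precedes it below -/
import Mathlib

section
/- In the graded Proca setup with compactly-supported subspaces, let E¹ be a Green operator for K¹ which commutes with P on V₀¹, i.e. P(E¹ f) = E¹(P f) for all f ∈ V₀¹ (as holds for the advanced and retarded Green operators of the 1-form Klein–Gordon operator on a globally hyperbolic spacetime). Then E_P := E¹ ∘ R, restricted to V₀¹, is a Green operator for the Proca operator P: for all f ∈ V₀¹ one has E_P(P f) = f and P(E_P f) = f. -/
/-- If `E¹` is a Green operator for the 1-form Klein–Gordon operator `K¹` on the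
compactly-supported subspace `W1` which commutes with the Proca operator `P` there, then
`E_P := E¹ ∘ R` is a Green operator for `P` on `W1`. -/
theorem stmt8 (V0 V1 V2 : Type*)
    [AddCommGroup V0] [Module ℂ V0] [AddCommGroup V1] [Module ℂ V1]
    [AddCommGroup V2] [Module ℂ V2]
    (d0 : V0 →ₗ[ℂ] V1) (d1 : V1 →ₗ[ℂ] V2) (δ1 : V1 →ₗ[ℂ] V0) (δ2 : V2 →ₗ[ℂ] V1)
    (hdd : d1 ∘ₗ d0 = 0) (hδδ : δ1 ∘ₗ δ2 = 0)
    (m : ℂ) (hm : m ≠ 0)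
    (K1 : V1 →ₗ[ℂ] V1) (hK1 : K1 = -(δ2 ∘ₗ d1) - d0 ∘ₗ δ1 + m ^ 2 • LinearMap.id)
    (P : V1 →ₗ[ℂ] V1) (hP : P = -(δ2 ∘ₗ d1) + m ^ 2 • LinearMap.id)
    (R : V1 →ₗ[ℂ] V1) (hR : R = LinearMap.id - (m ^ 2)⁻¹ • (d0 ∘ₗ δ1))
    (W0 : Submodule ℂ V0) (W1 : Submodule ℂ V1) (W2 : Submodule ℂ V2)
    (hWd0 : ∀ f ∈ W0, d0 f ∈ W1) (hWd1 : ∀ f ∈ W1, d1 f ∈ W2)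
    (hWδ1 : ∀ f ∈ W1, δ1 f ∈ W0) (hWδ2 : ∀ f ∈ W2, δ2 f ∈ W1)
    (E1 : V1 →ₗ[ℂ] V1)
    (hE1left : ∀ f ∈ W1, E1 (K1 f) = f) (hE1right : ∀ f ∈ W1, K1 (E1 f) = f)
    (hcomm : ∀ f ∈ W1, P (E1 f) = E1 (P f)) :
    ∀ f ∈ W1, E1 (R (P f)) = f ∧ P (E1 (R f)) = f := by
  have hm2 : (m ^ 2 : ℂ) ≠ 0 := pow_ne_zero 2 hm
  -- δ1 δ2 = 0 pointwise
  have hδδ' : ∀ x, δ1 (δ2 x) = 0 := fun x => congrArg (fun g => g x) hδδ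
  have hdd' : ∀ x, d1 (d0 x) = 0 := fun x => congrArg (fun g => g x) hdd
  have hRP : ∀ f, R (P f) = K1 f := by
    intro f
    simp only [hR, hP, hK1, LinearMap.sub_apply, LinearMap.add_apply, LinearMap.neg_apply,
      LinearMap.smul_apply, LinearMap.id_apply, LinearMap.comp_apply, map_add, map_neg,
      map_smul, hδδ', hdd']
    simp only [map_zero, smul_zero, sub_zero, smul_sub, smul_smul, mul_inv_cancel₀ hm2,
      one_smul]
    abel
  have hPR : ∀ f, P (R f) = K1 f := by
    intro f
    simp only [hR, hP, hK1, LinearMap.sub_apply, LinearMap.add_apply, LinearMap.neg_apply,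
      LinearMap.smul_apply, LinearMap.id_apply, LinearMap.comp_apply, map_sub, map_neg,
      map_smul, hδδ', hdd']
    simp only [map_zero, neg_zero, zero_add, smul_smul, inv_mul_cancel₀ hm2, one_smul]
    abel
  intro f hf
  have hRf : R f ∈ W1 := by
    rw [hR]
    simp only [LinearMap.sub_apply, LinearMap.smul_apply, LinearMap.id_apply,
      LinearMap.comp_apply]
    exact W1.sub_mem hf (W1.smul_mem _ (hWd0 _ (hWδ1 _ hf)))
  constructor
  · rw [hRP]; exact hE1left f hf
  · rw [hcomm _ hRf, hPR]; exact hE1left f hf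
end

section
/- In the graded Proca setup with compactly-supported subspaces, let E⁰ and E¹ be Green operators for K⁰ and K¹ respectively, satisfying the intertwining relations δ₁(E¹ f) = E⁰(δ₁ f) for all f ∈ V₀¹ and d₀(E⁰ h) = E¹(d₀ h) for all h ∈ V₀⁰ (as hold for advanced and retarded Green operators on a globally hyperbolic spacetime). Then the Proca Green operator E_P := E¹ ∘ R satisfies δ₁(E_P f) = m⁻²·δ₁ f for all f ∈ V₀¹, and E_P(d₀ h) = m⁻²·d₀ h for all h ∈ V₀⁰. -/
/-- If `E⁰`, `E¹` are Green operators for `K⁰`, `K¹` on the compactly-supported subspaces,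
intertwined by `δ₁` and `d₀`, then the Proca Green operator `E_P = E¹ ∘ R` satisfies
`δ₁ ∘ E_P = m⁻² δ₁` on `W1` and `E_P ∘ d₀ = m⁻² d₀` on `W0`. -/
theorem stmt9 (V0 V1 V2 : Type*)
    [AddCommGroup V0] [Module ℂ V0] [AddCommGroup V1] [Module ℂ V1]
    [AddCommGroup V2] [Module ℂ V2]
    (d0 : V0 →ₗ[ℂ] V1) (d1 : V1 →ₗ[ℂ] V2) (δ1 : V1 →ₗ[ℂ] V0) (δ2 : V2 →ₗ[ℂ] V1)
    (hdd : d1 ∘ₗ d0 = 0) (hδδ : δ1 ∘ₗ δ2 = 0)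
    (m : ℂ) (hm : m ≠ 0)
    (K0 : V0 →ₗ[ℂ] V0) (hK0 : K0 = -(δ1 ∘ₗ d0) + m ^ 2 • LinearMap.id)
    (K1 : V1 →ₗ[ℂ] V1) (hK1 : K1 = -(δ2 ∘ₗ d1) - d0 ∘ₗ δ1 + m ^ 2 • LinearMap.id)
    (P : V1 →ₗ[ℂ] V1) (hP : P = -(δ2 ∘ₗ d1) + m ^ 2 • LinearMap.id)
    (R : V1 →ₗ[ℂ] V1) (hR : R = LinearMap.id - (m ^ 2)⁻¹ • (d0 ∘ₗ δ1))
    (W0 : Submodule ℂ V0) (W1 : Submodule ℂ V1) (W2 : Submodule ℂ V2)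
    (hWd0 : ∀ f ∈ W0, d0 f ∈ W1) (hWd1 : ∀ f ∈ W1, d1 f ∈ W2)
    (hWδ1 : ∀ f ∈ W1, δ1 f ∈ W0) (hWδ2 : ∀ f ∈ W2, δ2 f ∈ W1)
    (E0 : V0 →ₗ[ℂ] V0)
    (hE0left : ∀ f ∈ W0, E0 (K0 f) = f) (hE0right : ∀ f ∈ W0, K0 (E0 f) = f)
    (E1 : V1 →ₗ[ℂ] V1)
    (hE1left : ∀ f ∈ W1, E1 (K1 f) = f) (hE1right : ∀ f ∈ W1, K1 (E1 f) = f)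
    (hintδ : ∀ f ∈ W1, δ1 (E1 f) = E0 (δ1 f))
    (hintd : ∀ h ∈ W0, d0 (E0 h) = E1 (d0 h)) :
    (∀ f ∈ W1, δ1 (E1 (R f)) = (m ^ 2)⁻¹ • δ1 f)
    ∧ (∀ h ∈ W0, E1 (R (d0 h)) = (m ^ 2)⁻¹ • d0 h) := by
  have hm2 : (m ^ 2) ≠ 0 := pow_ne_zero _ hm
  constructor
  · intro f hf
    have hRf : R f ∈ W1 := by
      rw [hR]; simp only [LinearMap.sub_apply, LinearMap.smul_apply, LinearMap.id_apply,
        LinearMap.comp_apply]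
      exact W1.sub_mem hf (W1.smul_mem _ (hWd0 _ (hWδ1 _ hf)))
    rw [hintδ _ hRf]
    have key : δ1 (R f) = (m ^ 2)⁻¹ • K0 (δ1 f) := by
      rw [hR, hK0]
      simp only [LinearMap.sub_apply, LinearMap.smul_apply, LinearMap.id_apply,
        LinearMap.comp_apply, LinearMap.add_apply, LinearMap.neg_apply, map_smul, map_sub]
      rw [smul_add, smul_neg, smul_smul, inv_mul_cancel₀ hm2, one_smul]
      abel
    rw [key, map_smul, hE0left _ (hWδ1 _ hf)]
  · intro h hh
    have key : R (d0 h) = (m ^ 2)⁻¹ • d0 (K0 h) := by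
      rw [hR, hK0]
      simp only [LinearMap.sub_apply, LinearMap.smul_apply, LinearMap.id_apply,
        LinearMap.comp_apply, LinearMap.add_apply, LinearMap.neg_apply, map_smul, map_add,
        map_neg]
      rw [smul_add, smul_neg, smul_smul, inv_mul_cancel₀ hm2, one_smul]
      abel
    rw [key, map_smul, ← hintd _ (by
      rw [hK0]
      simp only [LinearMap.add_apply, LinearMap.neg_apply, LinearMap.comp_apply,
        LinearMap.smul_apply, LinearMap.id_apply]
      exact W0.add_mem (W0.neg_mem (hWδ1 _ (hWd0 _ hh))) (W0.smul_mem _ hh)),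
      hE0left _ hh]
end
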